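/- Let A be an abelian category with enough projectives and finite global dimension d, let T be a triangulated category, and F : T → A a homological functor with shift compatibility satisfying conditions (i) and (ii) as above (projective-detecting and projective-realizing). Then for any objects X, Y of T, the filtration of [X, Y] arising from the Adams spectral sequence E_2^{pq} = Ext^p_A(F(X), F(Y)[q]) ⇒ [X, Σ^{p+q}Y] has length at most d + 1; in particular if Ext^p_A(F(X), F(Y)[−p]) = 0 for all 0 ≤ p ≤ d, then [X, Y] = 0. -/

import Mathlib

/-!
Realize an epimorphism from a projective onto `F X` as `F f` for some `f : G ⟶ X` (conditions (i)
and (ii)) and complete `f` to a distinguished triangle `W ⟶ G ⟶ X ⟶ W⟦1⟧`. Then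
`0 ⟶ F W ⟶ F G ⟶ F X ⟶ 0` is short exact, so `F W` has projective dimension one less than `F X`
and, by dimension shifting, `Ext^{p+1}(F W, -) ≅ Ext^{p+2}(F X, -)`. A morphism `g : X ⟶ Y` with
`F g = 0` is killed by `f` (condition (i) for `G`), hence factors through `δ : X ⟶ W⟦1⟧`. Since
`Ext¹(F X, F (Y⟦-1⟧)) = 0` the factorization can be corrected by a map factoring through `G⟦1⟧`
until it becomes `F`-null, and induction on the projective dimension of `F X`, applied to the
resulting map `W ⟶ Y⟦-1⟧`, shows `g = 0`. The hypothesis on `Ext⁰` gives `F g = 0` to begin with.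
-/

open CategoryTheory CategoryTheory.Limits CategoryTheory.Pretriangulated

/-- Projective dimension at most `n`, defined recursively via syzygies. -/
def projDimLE (A : Type*) [Category A] [Abelian A] : ℕ → A → Prop
  | 0, X => Projective X
  | (n + 1), X => Projective X ∨
      ∃ (P : A) (p : P ⟶ X), Epi p ∧ Projective P ∧ projDimLE A n (kernel p)

/-- The `n`-fold power of the inverse `[-1]` of the autoequivalence `[1]` of `A`. -/
def invPow {A : Type*} [Category A] (e : A ≌ A) : ℕ → (A ⥤ A)
  | 0 => 𝟭 A
  | (n + 1) => invPow e n ⋙ e.inverse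

lemma projDimLE_of_iso {A : Type*} [Category A] [Abelian A] :
    ∀ (n : ℕ) {X Y : A}, (X ≅ Y) → projDimLE A n X → projDimLE A n Y
  | 0, _, _, i, h => h.of_iso i
  | n + 1, _, _, i, h => by
    rcases h with h | ⟨P, p, hp, hP, hK⟩
    · exact Or.inl (h.of_iso i)
    · exact Or.inr ⟨P, p ≫ i.hom, epi_comp _ _, hP,
        projDimLE_of_iso n (kernelCompMono p i.hom).symm hK⟩

namespace ChainComplex

variable {A : Type*} [Category A] [Abelian A] (K : ChainComplex A ℕ)
  (R : Type*) [Ring R] [Linear R A] (M : A)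

lemma linearYonedaObj_exactAt_zero_iff :
    (K.linearYonedaObj R M).ExactAt 0 ↔ ∀ x : K.X 0 ⟶ M, K.d 1 0 ≫ x = 0 → x = 0 := by
  rw [HomologicalComplex.exactAt_iff' _ 0 0 1 (by simp) (by simp),
    ShortComplex.exact_iff_mono _ ((K.linearYonedaObj R M).shape 0 0 (by simp)),
    ModuleCat.mono_iff_injective, injective_iff_map_eq_zero]
  rfl

lemma linearYonedaObj_exactAt_succ_iff (i : ℕ) :
    (K.linearYonedaObj R M).ExactAt (i + 1) ↔
      ∀ x : K.X (i + 1) ⟶ M, K.d (i + 2) (i + 1) ≫ x = 0 → ∃ y, K.d (i + 1) i ≫ y = x := by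
  rw [HomologicalComplex.exactAt_iff' _ i (i + 1) (i + 2) (by simp) (by simp),
    ShortComplex.moduleCat_exact_iff]
  rfl

end ChainComplex

namespace CategoryTheory

variable {A : Type*} [Category A] [Abelian A]

namespace ProjectiveResolution

variable {X Y : A} (R : ProjectiveResolution X) (f : X ⟶ Y)

noncomputable abbrev augmentComp : ChainComplex A ℕ :=
  R.complex.augment (R.π.f 0 ≫ f) ((R.complex_d_comp_π_f_zero_assoc f).trans zero_comp)

lemma augmentComp_exactAt_succ [Mono f] (n : ℕ) : (R.augmentComp f).ExactAt (n + 1) := by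
  rw [HomologicalComplex.exactAt_iff' _ (n + 2) (n + 1) n (by simp) (by simp)]
  cases n with
  | zero =>
    let φ : ShortComplex.mk _ _ R.complex_d_comp_π_f_zero ⟶ (R.augmentComp f).sc' 2 1 0 :=
      { τ₁ := 𝟙 _, τ₂ := 𝟙 _, τ₃ := f
        comm₁₂ := (Category.id_comp _).trans (Category.comp_id _).symm
        comm₂₃ := Category.id_comp _ }
    have : Epi φ.τ₁ := inferInstanceAs (Epi (𝟙 _))
    have : IsIso φ.τ₂ := inferInstanceAs (IsIso (𝟙 _))
    have : Mono φ.τ₃ := inferInstanceAs (Mono f)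
    exact (ShortComplex.exact_iff_of_epi_of_isIso_of_mono φ).1 R.exact₀
  | succ n => exact R.exact_succ n

variable [EnoughProjectives A] {R' : Type*} [Ring R'] [Linear R' A]

lemma linearYonedaObj_exactAt_of_isZero_ext {M : A} {n : ℕ}
    (h : IsZero (((Ext R' A n).obj (Opposite.op X)).obj M)) :
    (R.complex.linearYonedaObj R' M).ExactAt n := by
  rw [HomologicalComplex.exactAt_iff_isZero_homology]
  exact h.of_iso (R.isoExt n M).symm

end ProjectiveResolution

lemma eq_zero_of_isZero_ext_zero [EnoughProjectives A] {R : Type*} [Ring R] [Linear R A] {X M : A}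
    (h : IsZero (((Ext R A 0).obj (Opposite.op X)).obj M)) (φ : X ⟶ M) : φ = 0 := by
  let P := ProjectiveResolution.of X
  have hP := (ChainComplex.linearYonedaObj_exactAt_zero_iff _ _ _).1
    (P.linearYonedaObj_exactAt_of_isZero_ext h)
  exact zero_of_epi_comp (P.π.f 0) (hP _ ((P.complex_d_comp_π_f_zero_assoc φ).trans zero_comp))

namespace ShortComplex.ShortExact

variable {S : ShortComplex A}

lemma projDimLE_X₁ (hS : S.ShortExact) {P : A} {p : P ⟶ S.X₃} (e : S.X₂ ≅ P)
    (he : S.g = e.hom ≫ p) {n : ℕ} (h : projDimLE A n (kernel p)) : projDimLE A n S.X₁ :=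
  projDimLE_of_iso n ((kernelIsIsoComp e.hom p).symm ≪≫ kernelIsoOfEq he.symm ≪≫
    IsLimit.conePointUniqueUpToIso (kernelIsKernel _) hS.fIsKernel) h

noncomputable def projectiveResolutionX₃ (hS : S.ShortExact) (hP : Projective S.X₂)
    (R : ProjectiveResolution S.X₁) : ProjectiveResolution S.X₃ where
  complex := R.augmentComp S.f
  projective
    | 0 => hP
    | n + 1 => R.projective n
  π := (ChainComplex.toSingle₀Equiv _ _).symm
    ⟨S.g, (Category.assoc _ _ _).trans ((congrArg _ S.zero).trans comp_zero)⟩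
  quasiIso := ⟨fun
    | 0 => by
      rw [ChainComplex.quasiIsoAt₀_iff, ShortComplex.quasiIso_iff_of_zeros' _ rfl rfl rfl]
      let φ : ShortComplex.mk (R.π.f 0 ≫ S.f) S.g
          ((Category.assoc _ _ _).trans ((congrArg _ S.zero).trans comp_zero)) ⟶ S :=
        { τ₁ := R.π.f 0, τ₂ := 𝟙 _, τ₃ := 𝟙 _
          comm₁₂ := (Category.comp_id _).symm
          comm₂₃ := (Category.id_comp _).trans (Category.comp_id _).symm }
      have : Epi φ.τ₁ := inferInstanceAs (Epi (R.π.f 0))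
      have : IsIso φ.τ₂ := inferInstanceAs (IsIso (𝟙 _))
      have : Mono φ.τ₃ := inferInstanceAs (Mono (𝟙 _))
      refine (ShortComplex.exact_and_epi_g_iff_of_iso ?_).1
        ⟨(ShortComplex.exact_iff_of_epi_of_isIso_of_mono φ).2 hS.exact, hS.epi_g⟩
      refine ShortComplex.isoMk (Iso.refl _) (Iso.refl _) (Iso.refl _) ?_ ?_
      · exact (Category.id_comp _).trans (Category.comp_id _).symm
      · dsimp
        exact (Category.id_comp _).trans
          ((ChainComplex.toSingle₀Equiv_symm_apply_f_zero _ _).trans (Category.comp_id _).symm)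
    | n + 1 => by
      have := hS.mono_f
      rw [quasiIsoAt_iff_exactAt' _ _ (ChainComplex.exactAt_succ_single_obj _ _)]
      exact R.augmentComp_exactAt_succ S.f n⟩

variable [EnoughProjectives A] {R : Type*} [Ring R] [Linear R A] (hS : S.ShortExact)
  (hP : Projective S.X₂)
include hS hP

lemma exists_extension_of_isZero_ext_one {M : A}
    (h : IsZero (((Ext R A 1).obj (Opposite.op S.X₃)).obj M)) (φ : S.X₁ ⟶ M) :
    ∃ ψ : S.X₂ ⟶ M, S.f ≫ ψ = φ := by
  let Q := ProjectiveResolution.of S.X₁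
  have hQ := (ChainComplex.linearYonedaObj_exactAt_succ_iff _ _ _ 0).1
    ((hS.projectiveResolutionX₃ hP Q).linearYonedaObj_exactAt_of_isZero_ext h)
  obtain ⟨ψ, hψ⟩ := hQ (Q.π.f 0 ≫ φ) ((Q.complex_d_comp_π_f_zero_assoc φ).trans zero_comp)
  exact ⟨ψ, (cancel_epi (Q.π.f 0)).1 ((Category.assoc _ _ _).symm.trans hψ)⟩

lemma isZero_ext_succ_of_isZero_ext_succ_succ {M : A} (n : ℕ)
    (h : IsZero (((Ext R A (n + 2)).obj (Opposite.op S.X₃)).obj M)) :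
    IsZero (((Ext R A (n + 1)).obj (Opposite.op S.X₁)).obj M) := by
  let Q := ProjectiveResolution.of S.X₁
  refine ((HomologicalComplex.exactAt_iff_isZero_homology _ _).1 ?_).of_iso (Q.isoExt _ M)
  rw [ChainComplex.linearYonedaObj_exactAt_succ_iff]
  exact (ChainComplex.linearYonedaObj_exactAt_succ_iff _ _ _ (n + 1)).1
    ((hS.projectiveResolutionX₃ hP Q).linearYonedaObj_exactAt_of_isZero_ext h)

end ShortComplex.ShortExact

namespace Functor

section

variable {T A : Type*} [Category T] [Category A] (F : T ⥤ A)

lemma map_shift_eq_zero [HasShift T ℤ] [HasZeroMorphisms A] {n : ℤ} {L : A ⥤ A}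
    [L.PreservesZeroMorphisms] (φ : shiftFunctor T n ⋙ F ≅ F ⋙ L) {X Y : T} {k : X ⟶ Y}
    (hk : F.map k = 0) : F.map (k⟦n⟧') = 0 := by
  rw [← cancel_mono (φ.hom.app Y), zero_comp]
  exact (φ.hom.naturality k).trans (by simp [hk])

/-- Stated for every `n = -p` so that the casts `↑(p + 1)` and `↑p + 1` need not be reconciled. -/
noncomputable def shiftIsoInvPow [HasShift T ℤ] (e : A ≌ A)
    (φ : shiftFunctor T (-1 : ℤ) ⋙ F ≅ F ⋙ e.inverse) (Y : T) :
    ∀ (p : ℕ) (n : ℤ), n = -p → (F.obj (Y⟦n⟧) ≅ (invPow e p).obj (F.obj Y))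
  | 0, n, hn => F.mapIso ((shiftFunctorZero' T n (by simpa using hn)).app Y)
  | p + 1, n, hn => F.mapIso ((shiftFunctorAdd' T (n + 1) (-1) n (by ring)).app Y) ≪≫
      φ.app _ ≪≫ e.inverse.mapIso (shiftIsoInvPow e φ Y p (n + 1) (by push_cast at hn; omega))

variable (hi : ∀ (C X : T), Projective (F.obj C) → Function.Bijective (fun g : C ⟶ X => F.map g))
include hi

lemma eq_zero_of_projective [HasZeroMorphisms T] [HasZeroMorphisms A] [F.PreservesZeroMorphisms]
    {X Y : T} (hX : Projective (F.obj X)) {g : X ⟶ Y} (hg : F.map g = 0) : g = 0 :=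
  (hi X Y hX).1 (hg.trans (F.map_zero X Y).symm)

lemma exists_map_eq_comp_of_projective
    (hii : ∀ P : A, Projective P → ∃ G : T, Nonempty (F.obj G ≅ P))
    {P : A} (hP : Projective P) {X : T} (p : P ⟶ F.obj X) :
    ∃ (G : T) (ι : F.obj G ≅ P) (f : G ⟶ X), F.map f = ι.hom ≫ p := by
  obtain ⟨G, ⟨ι⟩⟩ := hii P hP
  obtain ⟨f, hf⟩ := (hi G X (hP.of_iso ι.symm)).2 (ι.hom ≫ p)
  exact ⟨G, ι, f, hf⟩

end

variable {T A : Type*} [Category T] [Category A] [HasZeroObject T] [Preadditive T] [HasShift T ℤ]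
  [∀ n : ℤ, (shiftFunctor T n).Additive] [Pretriangulated T] [Abelian A]
  (F : T ⥤ A) [F.IsHomological]

lemma shortExact_map_of_epi_map_mor₂ {L : A ⥤ A} [L.PreservesZeroMorphisms]
    (φ : shiftFunctor T (-1 : ℤ) ⋙ F ≅ F ⋙ L) {Tr : Triangle T} (hT : Tr ∈ distTriang T)
    (hf : Epi (F.map Tr.mor₂)) : ((shortComplexOfDistTriangle Tr hT).map F).ShortExact := by
  have hδ : F.map Tr.mor₃ = 0 :=
    (F.map_distinguished_exact _ (rot_of_distTriang _ hT)).epi_f_iff.1 hf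
  refine { exact := F.map_distinguished_exact _ hT, epi_g := hf
           mono_f := (F.map_distinguished_exact _ (inv_rot_of_distTriang _ hT)).mono_g ?_ }
  -- `Tr.invRotate.mor₁`, unfolded
  change F.map (-(Tr.mor₃⟦(-1 : ℤ)⟧' ≫ (shiftFunctorCompIsoId T 1 (-1) (by omega)).hom.app _)) = 0
  rw [F.map_neg, F.map_comp, F.map_shift_eq_zero φ hδ, zero_comp, neg_zero]

variable [EnoughProjectives A]
  (hi : ∀ (C X : T), Projective (F.obj C) → Function.Bijective (fun g : C ⟶ X => F.map g))
include hi

lemma exists_factor_through_mor₃_of_map_eq_zero {W G X Y : T} {w : W ⟶ G} {f : G ⟶ X}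
    {δ : X ⟶ W⟦(1 : ℤ)⟧} (hT : Triangle.mk w f δ ∈ distTriang T) (hG : Projective (F.obj G))
    (hS : ((shortComplexOfDistTriangle _ hT).map F).ShortExact)
    (hext : IsZero (((Ext ℤ A 1).obj (Opposite.op (F.obj X))).obj (F.obj Y)))
    {g : X ⟶ Y⟦(1 : ℤ)⟧} (hg : F.map g = 0) :
    ∃ h : W ⟶ Y, F.map h = 0 ∧ δ ≫ h⟦(1 : ℤ)⟧' = g := by
  have hfg : f ≫ g = 0 := F.eq_zero_of_projective hi hG (by rw [F.map_comp, hg, comp_zero])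
  obtain ⟨g', rfl⟩ : ∃ g' : W⟦(1 : ℤ)⟧ ⟶ Y⟦(1 : ℤ)⟧, g = δ ≫ g' :=
    Triangle.yoneda_exact₃ _ hT g hfg
  obtain ⟨h₀, rfl⟩ := (shiftFunctor T (1 : ℤ)).map_surjective g'
  obtain ⟨ψ, hψ⟩ := hS.exists_extension_of_isZero_ext_one hG hext (F.map h₀)
  obtain ⟨s, hs⟩ := (hi G Y hG).2 ψ
  refine ⟨h₀ - w ≫ s, ?_, ?_⟩
  · rw [F.map_sub, F.map_comp]
    exact sub_eq_zero.2 (hψ.symm.trans (congrArg _ hs.symm))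
  · have hδw : δ ≫ w⟦(1 : ℤ)⟧' = 0 := comp_distTriang_mor_zero₃₁ _ hT
    rw [Functor.map_sub, Functor.map_comp, Preadditive.comp_sub, reassoc_of% hδw, zero_comp,
      sub_zero]

theorem eq_zero_of_map_eq_zero_of_isZero_ext
    (hii : ∀ P : A, Projective P → ∃ G : T, Nonempty (F.obj G ≅ P))
    {L : A ⥤ A} [L.PreservesZeroMorphisms] (φ : shiftFunctor T (-1 : ℤ) ⋙ F ≅ F ⋙ L) :
    ∀ (n : ℕ) {X Y : T} (g : X ⟶ Y), projDimLE A n (F.obj X) → F.map g = 0 →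
      (∀ p < n, IsZero (((Ext ℤ A (p + 1)).obj (Opposite.op (F.obj X))).obj
        (F.obj (Y⟦-(p + 1 : ℤ)⟧)))) → g = 0
  | 0, _, _, _, hX, hg, _ => F.eq_zero_of_projective hi hX hg
  | n + 1, X, Y, g, hX, hg, hext => by
    rcases hX with hX | ⟨P, p, _, hP, hK⟩
    · exact F.eq_zero_of_projective hi hX hg
    obtain ⟨G, ι, f, hf⟩ := F.exists_map_eq_comp_of_projective hi hii hP p
    have hG : Projective (F.obj G) := hP.of_iso ι.symm
    obtain ⟨W, w, δ, hT⟩ := distinguished_cocone_triangle₁ f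
    have hfepi : Epi (F.map f) := by rw [hf]; exact epi_comp _ _
    have hS := F.shortExact_map_of_epi_map_mor₂ φ hT hfepi
    let ε := (shiftFunctorCompIsoId T (-1 : ℤ) 1 (by norm_num)).app Y
    obtain ⟨h, hh, hδh⟩ := F.exists_factor_through_mor₃_of_map_eq_zero hi hT hG hS
      (hext 0 (by omega)) (Y := Y⟦(-1 : ℤ)⟧) (g := g ≫ ε.inv) (by rw [F.map_comp, hg, zero_comp])
    have hextW : ∀ q < n, IsZero (((Ext ℤ A (q + 1)).obj (Opposite.op (F.obj W))).obj
        (F.obj (Y⟦(-1 : ℤ)⟧⟦-(q + 1 : ℤ)⟧))) := fun q hq =>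
      hS.isZero_ext_succ_of_isZero_ext_succ_succ hG q
        ((hext (q + 1) (by omega)).of_iso (((Ext ℤ A (q + 2)).obj _).mapIso (F.mapIso
          ((shiftFunctorAdd' T (-1) (-(q + 1 : ℤ)) (-((q + 1 : ℕ) + 1 : ℤ))
            (by push_cast; ring)).app Y).symm)))
    have h0 : h = 0 :=
      eq_zero_of_map_eq_zero_of_isZero_ext hii φ n h (hS.projDimLE_X₁ ι hf hK) hh hextW
    rw [← cancel_mono ε.inv, zero_comp, ← hδh, h0, Functor.map_zero, comp_zero]

end Functor

end CategoryTheory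

theorem adams_ext_vanishing_implies_zero
    {T A : Type*} [Category T] [Category A]
    [HasZeroObject T] [Preadditive T] [HasShift T ℤ]
    [∀ n : ℤ, (shiftFunctor T n).Additive] [Pretriangulated T]
    [Abelian A] [EnoughProjectives A]
    (d : ℕ) (hgl : ∀ X : A, projDimLE A d X)
    (F : T ⥤ A) [F.IsHomological]
    (e : A ≌ A) (compat : shiftFunctor T (1 : ℤ) ⋙ F ≅ F ⋙ e.functor)
    (hi : ∀ (C X : T), Projective (F.obj C) →
      Function.Bijective (fun g : C ⟶ X => F.map g))
    (hii : ∀ P : A, Projective P → ∃ G : T, Nonempty (F.obj G ≅ P))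
    (X Y : T)
    (hvanish : ∀ p : ℕ, p ≤ d →
      Subsingleton (((_root_.Ext ℤ A p).obj (Opposite.op (F.obj X))).obj
        ((invPow e p).obj (F.obj Y)))) :
    ∀ g : X ⟶ Y, g = 0 := by
  intro g
  let φ := (CatCommSq.hInv (shiftEquiv T (1 : ℤ)) F F e ⟨compat⟩).iso
  have hext (p : ℕ) (hp : p ≤ d) :
      IsZero (((Ext ℤ A p).obj (Opposite.op (F.obj X))).obj ((invPow e p).obj (F.obj Y))) := by
    have := hvanish p hp
    exact ModuleCat.isZero_of_subsingleton _
  refine F.eq_zero_of_map_eq_zero_of_isZero_ext hi hii φ d g (hgl _)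
    (eq_zero_of_isZero_ext_zero (hext 0 d.zero_le) _) fun p hp => ?_
  exact (hext (p + 1) hp).of_iso (((Ext ℤ A (p + 1)).obj _).mapIso
    (F.shiftIsoInvPow e φ Y (p + 1) _ (by push_cast; ring)))
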